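/- arXiv:2303.04434 — 3 statements merged into one kernel-verified Lean document; each statement's English description precedes it below -/
import Mathlib

section
/- Let α ∈ [1/2, 1/(2(1−a²))] and β > 0, and suppose f_d(0,α,β) ≤ f_s(0,α). Then f_d(u,α,β) < f_s(u,α) for all u ∈ (0,1). -/
/-!
Put `t = (1 - u²)/2`, `c = √(1 - 2a²)`, `k = √(1 - a²)` (so `c² + a² = k²`) and
`w = 1 - t + 2αt`. Up to signs of coordinates, `p(u,-1) = (a u, a w, c w)` and
`p(u,u) = (a u w, a u w, z)` with `z = c((1-t)² + 4α(1-t)t) + βt²`. The hypothesis at `u = 0`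
says `c(1 + 4α) + β ≤ k(2 + 4α)`, and `z` only grows with `β`, so it suffices to treat the extremal
`β`. For it `k w - z = (1 - 2t)(k(1 + t + 2αt) - c(1 + 4αt))`, so `(1 - 2t)` factors out of
`f_s - f_d`, and the remaining polynomial inequality in `k, c, α, t` is homogeneous in `(k, c)`
and has an explicit positivity certificate.
-/
noncomputable section

open Real Set

/-- A vector in Euclidean 3-space. -/
def v3 (x y z : ℝ) : EuclideanSpace ℝ (Fin 3) := !₂[x, y, z]

/-- Quadratic Bernstein polynomials (parametrized on `[-1,1]`). -/
def bern (i : Fin 3) (u : ℝ) : ℝ :=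
  (Nat.choose 2 (i : ℕ)) * ((1 + u) / 2) ^ (i : ℕ) * ((1 - u) / 2) ^ (2 - (i : ℕ))

/-- Control points `ctrl a α β i j = b i j` of the tensor product quadratic Bézier patch:
`b₀₀ = (-a,-a,√(1-2a²))`, `b₂₀ = (a,-a,√(1-2a²))`, `b₀₂ = (-a,a,√(1-2a²))`,
`b₂₂ = (a,a,√(1-2a²))`, `b₁₀ = α(b₀₀+b₂₀)`, `b₀₁ = α(b₀₀+b₀₂)`, `b₂₁ = α(b₂₀+b₂₂)`,
`b₁₂ = α(b₀₂+b₂₂)`, `b₁₁ = β(0,0,1)`. The first index is the `u`-index. -/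
def ctrl (a α β : ℝ) : Fin 3 → Fin 3 → EuclideanSpace ℝ (Fin 3) :=
  ![![v3 (-a) (-a) (Real.sqrt (1 - 2*a^2)),
     α • (v3 (-a) (-a) (Real.sqrt (1 - 2*a^2)) + v3 (-a) a (Real.sqrt (1 - 2*a^2))),
     v3 (-a) a (Real.sqrt (1 - 2*a^2))],
    ![α • (v3 (-a) (-a) (Real.sqrt (1 - 2*a^2)) + v3 a (-a) (Real.sqrt (1 - 2*a^2))),
     β • v3 0 0 1,
     α • (v3 (-a) a (Real.sqrt (1 - 2*a^2)) + v3 a a (Real.sqrt (1 - 2*a^2)))],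
    ![v3 a (-a) (Real.sqrt (1 - 2*a^2)),
     α • (v3 a (-a) (Real.sqrt (1 - 2*a^2)) + v3 a a (Real.sqrt (1 - 2*a^2))),
     v3 a a (Real.sqrt (1 - 2*a^2))]]

/-- The tensor product quadratic Bézier patch
`p(u,v) = ∑ᵢ ∑ⱼ Bᵢ²(u) Bⱼ²(v) bᵢⱼ`. -/
def bez (a α β u v : ℝ) : EuclideanSpace ℝ (Fin 3) :=
  ∑ i : Fin 3, ∑ j : Fin 3, (bern i u * bern j v) • ctrl a α β i j

/-- The simplified radial error `f(u,v,α,β) = ‖p(u,v)‖² - 1`. -/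
def f (a α β u v : ℝ) : ℝ := ‖bez a α β u v‖ ^ 2 - 1

/-- `f_s(u,α) = f(u,-1,α,β)`; this does not depend on `β` (the control point `b₁₁`
does not contribute on the side `v = -1`), so we take `β = 0`. -/
def fs (a α u : ℝ) : ℝ := f a α 0 u (-1)

/-- `f_d(u,α,β) = f(u,u,α,β)`, the error along the diagonal. -/
def fd (a α β u : ℝ) : ℝ := f a α β u u

lemma fs_eq (a α u : ℝ) :
    fs a α u = a^2 * u^2 + (a^2 + √(1 - 2*a^2)^2) * ((1 + u^2)/2 + α*(1 - u^2))^2 - 1 := by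
  simp [fs, f, bez, ctrl, bern, v3, EuclideanSpace.real_norm_sq_eq, Fin.sum_univ_three]
  ring

lemma fd_eq (a α β u : ℝ) :
    fd a α β u = 2*a^2 * u^2 * ((1 + u^2)/2 + α*(1 - u^2))^2
      + (√(1 - 2*a^2) * (((1 + u^2)/2)^2 + α*(1 + u^2)*(1 - u^2)) + β*((1 - u^2)/2)^2)^2 - 1 := by
  simp [fd, f, bez, ctrl, bern, v3, EuclideanSpace.real_norm_sq_eq, Fin.sum_univ_three]
  ring

section

variable {c k α β t : ℝ}

lemma diag_height_nonneg (hc : 0 ≤ c) (hα : 0 ≤ α) (hβ : 0 ≤ β) (ht₀ : 0 ≤ t) (ht₁ : t ≤ 1) :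
    0 ≤ c * ((1 - t)^2 + 4*α*(1 - t)*t) + β*t^2 := by
  have h : 0 ≤ 4*α*(1 - t)*t := mul_nonneg (by nlinarith) ht₀
  exact add_nonneg (mul_nonneg hc (add_nonneg (sq_nonneg (1 - t)) h)) (mul_nonneg hβ (sq_nonneg t))

lemma diag_height_le (hβk : c*(1 + 4*α) + β ≤ k*(2 + 4*α)) :
    c * ((1 - t)^2 + 4*α*(1 - t)*t) + β*t^2
      ≤ c*(1 - 2*t)*(1 + 4*α*t) + k*(2 + 4*α)*t^2 := by
  linear_combination mul_nonneg (sq_nonneg t) (sub_nonneg.2 hβk)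

lemma extremal_gap_pos (hc : 0 ≤ c) (hck : c < k) (hα : 1/2 ≤ α)
    (hαk : (2*α - 1)*k^2 ≤ k^2 - c^2) (ht : 0 < t) :
    (k^2 - c^2) * (2*(1 - t + 2*α*t)^2 - 1)
      < (k*(1 + t + 2*α*t) - c*(1 + 4*α*t))
        * (k*(1 - t + 2*α*t) + (c*(1 - 2*t)*(1 + 4*α*t) + k*(2 + 4*α)*t^2)) := by
  have hk : 0 < k := hc.trans_lt hck
  obtain ⟨d, hd, rfl⟩ : ∃ d, 0 ≤ d ∧ α = (1 + d)/2 := ⟨2*α - 1, by linarith, by ring⟩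
  obtain ⟨m, hm, hm_def⟩ : ∃ m, 0 < m ∧ m = k - c := ⟨_, sub_pos.2 hck, rfl⟩
  obtain ⟨σ, hσ, hσ_def⟩ : ∃ σ, 0 ≤ σ ∧ σ = k^2 - c^2 - d*k^2 := ⟨_, by linarith, rfl⟩
  -- `k * (rhs - lhs)` equals this; `σ` is the slack in the upper bound on `α`.
  have hcert : 0 < t * (2*k*σ + t*(2*m*(m^2 + σ) + 3*k*m^2*d + 2*k*d^2*(σ + d*k^2)
      + 3*k*d*σ) + t^2*(2*k*(2*m*(1 + d) - k*d)^2)) := by positivity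
  rw [← sub_pos, ← mul_pos_iff_of_pos_left hk]
  exact hcert.trans_eq (by subst hm_def hσ_def; ring)

lemma diag_lt_side (hc : 0 ≤ c) (hck : c < k) (hα : 1/2 ≤ α)
    (hαk : (2*α - 1)*k^2 ≤ k^2 - c^2) (hβ : 0 ≤ β) (hβk : c*(1 + 4*α) + β ≤ k*(2 + 4*α))
    (ht₀ : 0 < t) (ht₁ : t < 1/2) :
    2*(k^2 - c^2)*(1 - 2*t)*(1 - t + 2*α*t)^2 + (c * ((1 - t)^2 + 4*α*(1 - t)*t) + β*t^2)^2
      < (k^2 - c^2)*(1 - 2*t) + k^2*(1 - t + 2*α*t)^2 := by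
  have hz := pow_le_pow_left₀ (diag_height_nonneg hc (by linarith) hβ ht₀.le (by linarith))
    (diag_height_le (t := t) hβk) 2
  have hgap := mul_lt_mul_of_pos_left (extremal_gap_pos hc hck hα hαk ht₀)
    (by linarith : 0 < 1 - 2*t)
  -- With `w = 1 - t + 2αt` and `Z` the bound of `diag_height_le`,
  -- `k w - Z = (1 - 2t)(k(1 + t + 2αt) - c(1 + 4αt))`, which factors `k² w² - Z²`.
  linear_combination hz + hgap

end

/-- If `α ∈ [1/2, 1/(2(1-a²))]`, `β > 0` and `f_d(0,α,β) ≤ f_s(0,α)`, then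
`f_d(u,α,β) < f_s(u,α)` for all `u ∈ (0,1)`. -/
theorem fs_gt_fd (a : ℝ) (ha : 0 < a) (ha' : a ≤ Real.sqrt 2 / 2)
    (α β : ℝ) (hα : α ∈ Set.Icc (1/2 : ℝ) (1/(2*(1 - a^2)))) (hβ : 0 < β)
    (h : fd a α β 0 ≤ fs a α 0) :
    ∀ u ∈ Set.Ioo (0:ℝ) 1, fd a α β u < fs a α u := by
  obtain ⟨hα₁, hα₂⟩ := hα
  have ha2 : a^2 ≤ 1/2 := by
    have := pow_le_pow_left₀ ha.le ha' 2
    rw [div_pow, sq_sqrt zero_le_two] at this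
    linarith
  set c := √(1 - 2*a^2) with hc_def
  set k := √(1 - a^2)
  have hc : 0 ≤ c := sqrt_nonneg _
  have hk : 0 ≤ k := sqrt_nonneg _
  have hc2 : c^2 = 1 - 2*a^2 := sq_sqrt (by linarith)
  have hk2 : k^2 = 1 - a^2 := sq_sqrt (by linarith)
  have hck : c < k := sqrt_lt_sqrt (by linarith) (by nlinarith)
  have hαk : (2*α - 1)*k^2 ≤ k^2 - c^2 := by
    rw [le_div_iff₀ (by linarith)] at hα₂
    linear_combination hα₂ + (2*α - 2) * hk2 + hc2
  have hβk : c*(1 + 4*α) + β ≤ k*(2 + 4*α) := by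
    rw [fd_eq, fs_eq, ← hc_def] at h
    have hsq : (c*(1 + 4*α) + β)^2 ≤ (k*(2 + 4*α))^2 := by
      linear_combination 16*h + (2 + 4*α)^2*(hc2 - hk2)
    exact (pow_le_pow_iff_left₀ (by nlinarith) (by nlinarith) two_ne_zero).1 hsq
  rintro u ⟨hu₀, hu₁⟩
  have hdiag := diag_lt_side hc hck hα₁ hαk hβ.le hβk (t := (1 - u^2)/2)
    (by nlinarith) (by nlinarith)
  rw [show k^2 - c^2 = a^2 by linear_combination hk2 - hc2] at hdiag
  rw [fd_eq, fs_eq, ← hc_def]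
  linear_combination hdiag + ((1 + u^2)/2 + α*(1 - u^2))^2 * (hk2 - hc2)

end
end

section
/- For every α > 0, the quadratic function β ↦ f_d(0,α,β) − f_s(0,α) has exactly one positive zero, namely β₀(α) = 2(1+2α)√(1−a²) − (1+4α)√(1−2a²); that is, for β > 0 one has f_d(0,α,β) = f_s(0,α) if and only if β = β₀(α). -/
noncomputable section

open Real Set

/-- `β₀(α) = 2(1+2α)√(1-a²) - (1+4α)√(1-2a²)`. -/
def β₀ (a α : ℝ) : ℝ := 2*(1 + 2*α)*Real.sqrt (1 - a^2) - (1 + 4*α)*Real.sqrt (1 - 2*a^2)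

/-!
At `u = 0` the diagonal point is `p(0,0) = (0, 0, ((1 + 4α)√(1-2a²) + β)/4)`, and the side point
`p(0,-1) = (0, -(1 + 2α)a/2, (1 + 2α)√(1-2a²)/2)` has length `(1 + 2α)√(1-a²)/2`.
For `β > 0` both lengths are nonnegative, so equal squared lengths means equal lengths, an
equation that is linear in `β` with solution `β₀(α)`.
-/
lemma norm_sq_v3 (x y z : ℝ) : ‖v3 x y z‖ ^ 2 = x ^ 2 + y ^ 2 + z ^ 2 := by
  simp [EuclideanSpace.norm_sq_eq, Fin.sum_univ_three, v3]

lemma bez_center (a α β : ℝ) :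
    bez a α β 0 0 = v3 0 0 (((1 + 4 * α) * √(1 - 2 * a ^ 2) + β) / 4) := by
  ext k
  simp only [bez, Fin.sum_univ_three, ctrl, bern, v3]
  fin_cases k <;> simp <;> ring

lemma bez_side_midpoint (a α : ℝ) :
    bez a α 0 0 (-1) = v3 0 (-(1 + 2 * α) * a / 2) ((1 + 2 * α) * √(1 - 2 * a ^ 2) / 2) := by
  ext k
  simp only [bez, Fin.sum_univ_three, ctrl, bern, v3]
  fin_cases k <;> simp <;> ring

lemma fd_zero (a α β : ℝ) :
    fd a α β 0 = (((1 + 4 * α) * √(1 - 2 * a ^ 2) + β) / 4) ^ 2 - 1 := by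
  rw [fd, f, bez_center, norm_sq_v3]
  ring

lemma fs_zero {a : ℝ} (ha : 2 * a ^ 2 ≤ 1) (α : ℝ) :
    fs a α 0 = ((1 + 2 * α) * √(1 - a ^ 2) / 2) ^ 2 - 1 := by
  have hc : √(1 - 2 * a ^ 2) ^ 2 = 1 - 2 * a ^ 2 := Real.sq_sqrt (by linarith)
  have hs : √(1 - a ^ 2) ^ 2 = 1 - a ^ 2 := Real.sq_sqrt (by nlinarith)
  rw [fs, f, bez_side_midpoint, norm_sq_v3]
  linear_combination (1 + 2 * α) ^ 2 / 4 * (hc - hs)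

lemma two_mul_sq_le_one {a : ℝ} (ha : 0 ≤ a) (ha' : a ≤ √2 / 2) : 2 * a ^ 2 ≤ 1 := by
  have h := pow_le_pow_left₀ ha ha' 2
  rw [div_pow, Real.sq_sqrt zero_le_two] at h
  linarith

lemma β₀_pos {a α : ℝ} (ha : 2 * a ^ 2 ≤ 1) (hα : 0 ≤ 1 + 4 * α) : 0 < β₀ a α := by
  have hs : 0 < √(1 - a ^ 2) := Real.sqrt_pos.mpr (by nlinarith)
  have hcs : √(1 - 2 * a ^ 2) ≤ √(1 - a ^ 2) := Real.sqrt_le_sqrt (by nlinarith)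
  rw [β₀]
  linarith [mul_le_mul_of_nonneg_left hcs hα]

/-- For every `α > 0`, the function `β ↦ f_d(0,α,β) - f_s(0,α)` has exactly one positive
zero, namely `β₀(α)`: we have `β₀(α) > 0`, and for `β > 0`,
`f_d(0,α,β) = f_s(0,α)` iff `β = β₀(α)`. -/
theorem beta0_unique_positive_zero (a : ℝ) (ha : 0 < a) (ha' : a ≤ Real.sqrt 2 / 2)
    (α : ℝ) (hα : 0 < α) :
    0 < β₀ a α ∧ ∀ β : ℝ, 0 < β → (fd a α β 0 - fs a α 0 = 0 ↔ β = β₀ a α) := by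
  have ha2 := two_mul_sq_le_one ha.le ha'
  refine ⟨β₀_pos ha2 (by linarith), fun β hβ => ?_⟩
  rw [fd_zero, fs_zero ha2, sub_eq_zero, sub_left_inj,
    sq_eq_sq₀ (by positivity) (by positivity), β₀]
  constructor <;> intro h <;> linarith

end
end

section
/- Let α > 0 satisfy f_s(0,α) ≥ 0 and let F(u,α) = f_d(u,α,β₀(α)) (so that F(0,α) = f_s(0,α)). Then the derivative with respect to α satisfies (d/dα) F(0,α) ≥ (d/dα) F(u,α) for all u ∈ [−1,1]. -/
noncomputable section

open Real Set

lemma bern_zero (u : ℝ) : bern 0 u = ((1 - u) / 2) ^ 2 := by simp [bern]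
lemma bern_one (u : ℝ) : bern 1 u = 2 * ((1 + u) / 2) * ((1 - u) / 2) := by simp [bern]
lemma bern_two (u : ℝ) : bern 2 u = ((1 + u) / 2) ^ 2 := by simp [bern]

lemma bez_apply (a α β u v : ℝ) (k : Fin 3) :
    bez a α β u v k = ∑ i : Fin 3, ∑ j : Fin 3, bern i u * bern j v * ctrl a α β i j k := by
  simp [bez]

lemma bez_zero_neg_one (a α : ℝ) :
    bez a α 0 0 (-1) = ((1 + 2 * α) / 2) • v3 0 (-a) √(1 - 2 * a ^ 2) := by
  ext k
  fin_cases k <;>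
  simp only [bez_apply, Fin.sum_univ_three, bern_zero, bern_one, bern_two, ctrl, v3,
    Matrix.cons_val', Matrix.cons_val_fin_one, Matrix.cons_val_zero, Matrix.cons_val_one,
    Matrix.cons_val, PiLp.add_apply, PiLp.smul_apply, smul_eq_mul, Fin.isValue, Fin.zero_eta,
    Fin.mk_one, Fin.reduceFinMk] <;>
  ring

lemma fs_zero_eq (a α : ℝ) :
    fs a α 0 = ((1 + 2 * α) / 2) ^ 2 * (a ^ 2 + √(1 - 2 * a ^ 2) ^ 2) - 1 := by
  rw [fs, f, bez_zero_neg_one, norm_smul, mul_pow, Real.norm_eq_abs, sq_abs, norm_sq_v3]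
  ring

def diagXY (a u t : ℝ) : ℝ := a * u * (1 + u ^ 2) / 2 + t * (a * u * (1 - u ^ 2))

def diagZ (s c u t : ℝ) : ℝ :=
  c * u ^ 2 + s * (1 - u ^ 2) ^ 2 / 2 + t * ((1 - u ^ 2) * (2 * c * u ^ 2 + s * (1 - u ^ 2)))

lemma bez_diag_β₀ (a t u : ℝ) :
    bez a t (β₀ a t) u u =
      v3 (diagXY a u t) (diagXY a u t) (diagZ √(1 - a ^ 2) √(1 - 2 * a ^ 2) u t) := by
  ext k
  fin_cases k <;>
  simp only [bez_apply, Fin.sum_univ_three, bern_zero, bern_one, bern_two, ctrl, v3, β₀, diagXY,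
    diagZ, Matrix.cons_val', Matrix.cons_val_fin_one, Matrix.cons_val_zero, Matrix.cons_val_one,
    Matrix.cons_val, PiLp.add_apply, PiLp.smul_apply, smul_eq_mul, Fin.isValue, Fin.zero_eta,
    Fin.mk_one, Fin.reduceFinMk] <;>
  ring

lemma fd_β₀_eq (a t u : ℝ) :
    fd a t (β₀ a t) u =
      2 * diagXY a u t ^ 2 + diagZ √(1 - a ^ 2) √(1 - 2 * a ^ 2) u t ^ 2 - 1 := by
  rw [fd, f, bez_diag_β₀, norm_sq_v3]
  ring

def diagSpeed (a s c u α : ℝ) : ℝ :=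
  4 * (a * u * (1 - u ^ 2)) * diagXY a u α
    + 2 * ((1 - u ^ 2) * (2 * c * u ^ 2 + s * (1 - u ^ 2))) * diagZ s c u α

lemma hasDerivAt_diagXY (a u α : ℝ) : HasDerivAt (diagXY a u) (a * u * (1 - u ^ 2)) α :=
  (hasDerivAt_mul_const _).const_add _

lemma hasDerivAt_diagZ (s c u α : ℝ) :
    HasDerivAt (diagZ s c u) ((1 - u ^ 2) * (2 * c * u ^ 2 + s * (1 - u ^ 2))) α :=
  (hasDerivAt_mul_const _).const_add _

lemma hasDerivAt_fd_β₀ (a u α : ℝ) :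
    HasDerivAt (fun t => fd a t (β₀ a t) u)
      (diagSpeed a √(1 - a ^ 2) √(1 - 2 * a ^ 2) u α) α := by
  simp only [fd_β₀_eq]
  refine ((((hasDerivAt_diagXY a u α).fun_pow 2).const_mul 2).fun_add
    ((hasDerivAt_diagZ _ _ u α).fun_pow 2)).sub_const 1 |>.congr_deriv ?_
  simp only [diagSpeed]
  ring

-- `r` stands for `2 - 3a² - 2sc`, `h` for `1/2 - a²` and `w` for `u²`.
def speedGapConst (r h w : ℝ) : ℝ :=
  r * (1 - w) ^ 2 * (4 - 3 * w) + w * (h * (1 + 2 * w - w ^ 2) + ((1 - w) ^ 2 + 2) / 2)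

def speedGapSlope (r h w : ℝ) : ℝ :=
  4 * r * (1 - w) ^ 3 + 2 * w * ((2 - w) ^ 2 / 2 + h * w * (4 - 3 * w))

lemma speedGapConst_nonneg {r h w : ℝ} (hr : 0 ≤ r) (hh : 0 ≤ h) (hw₀ : 0 ≤ w) (hw₁ : w ≤ 1) :
    0 ≤ speedGapConst r h w := by
  have : 0 ≤ 4 - 3 * w := by linarith
  have : 0 ≤ 1 + 2 * w - w ^ 2 := by nlinarith
  unfold speedGapConst
  positivity

lemma speedGapSlope_nonneg {r h w : ℝ} (hr : 0 ≤ r) (hh : 0 ≤ h) (hw₀ : 0 ≤ w) (hw₁ : w ≤ 1) :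
    0 ≤ speedGapSlope r h w := by
  have : 0 ≤ 4 - 3 * w := by linarith
  have : 0 ≤ 1 - w := by linarith
  unfold speedGapSlope
  positivity

lemma diagSpeed_zero_sub (a s c u α : ℝ) (hs : s ^ 2 = 1 - a ^ 2) (hc : c ^ 2 = 1 - 2 * a ^ 2) :
    diagSpeed a s c 0 α - diagSpeed a s c u α =
      u ^ 2 * (speedGapConst (2 - 3 * a ^ 2 - 2 * s * c) (1 / 2 - a ^ 2) (u ^ 2)
        + (α - 1 / 2) * speedGapSlope (2 - 3 * a ^ 2 - 2 * s * c) (1 / 2 - a ^ 2) (u ^ 2)) := by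
  simp only [diagSpeed, diagXY, diagZ, speedGapConst, speedGapSlope]
  linear_combination (1 + 2 * α) * (1 - (1 - u ^ 2) ^ 4) * hs
    - 4 * (1 - u ^ 2) * u ^ 4 * (1 + 2 * α * (1 - u ^ 2)) * hc

lemma diagSpeed_le_diagSpeed_zero {a s c u α : ℝ} (hs : s ^ 2 = 1 - a ^ 2)
    (hc : c ^ 2 = 1 - 2 * a ^ 2) (ha : a ^ 2 ≤ 1 / 2) (hα : 1 / 2 ≤ α) (hu : u ^ 2 ≤ 1) :
    diagSpeed a s c u α ≤ diagSpeed a s c 0 α := by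
  have hr : 0 ≤ 2 - 3 * a ^ 2 - 2 * s * c := by linarith [two_mul_le_add_sq s c]
  have hh : 0 ≤ 1 / 2 - a ^ 2 := by linarith
  rw [← sub_nonneg, diagSpeed_zero_sub a s c u α hs hc]
  exact mul_nonneg (sq_nonneg u) (add_nonneg (speedGapConst_nonneg hr hh (sq_nonneg u) hu)
    (mul_nonneg (by linarith) (speedGapSlope_nonneg hr hh (sq_nonneg u) hu)))

lemma half_le_of_fs_zero_nonneg {a α : ℝ} (ha : a ^ 2 ≤ 1 / 2) (hα : 0 < α)
    (h0 : 0 ≤ fs a α 0) : 1 / 2 ≤ α := by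
  rw [fs_zero_eq, sq_sqrt (by linarith)] at h0
  nlinarith

/-- Let `α > 0` with `f_s(0,α) ≥ 0`, and let `F(u,α) = f_d(u,α,β₀(α))`. Then
`(d/dα) F(0,α) ≥ (d/dα) F(u,α)` for all `u ∈ [-1,1]`. -/
theorem speedincreasing (a : ℝ) (ha : 0 < a) (ha' : a ≤ Real.sqrt 2 / 2)
    (α : ℝ) (hα : 0 < α) (h0 : 0 ≤ fs a α 0) :
    ∀ u ∈ Set.Icc (-1:ℝ) 1,
      deriv (fun t => fd a t (β₀ a t) u) α ≤ deriv (fun t => fd a t (β₀ a t) 0) α := by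
  intro u ⟨hu₁, hu₂⟩
  have ha2 : a ^ 2 ≤ 1 / 2 := by
    calc a ^ 2 ≤ (√2 / 2) ^ 2 := pow_le_pow_left₀ ha.le ha' 2
      _ = 1 / 2 := by rw [div_pow, sq_sqrt zero_le_two]; norm_num
  rw [(hasDerivAt_fd_β₀ a u α).deriv, (hasDerivAt_fd_β₀ a 0 α).deriv]
  exact diagSpeed_le_diagSpeed_zero (sq_sqrt (by linarith)) (sq_sqrt (by linarith)) ha2
    (half_le_of_fs_zero_nonneg ha2 hα h0) (by nlinarith)

end
end
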